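/- arXiv:2212.13907 — 3 statements merged into one kernel-verified Lean document; each statement's English description precedes it below -/
import Mathlib

section
/- Dilation covariance of the LCST: for λ > 0 and f ∈ L²(ℝ), (S^{M₁,M₂}_ψ δ_λ f)(a,b) = (S^{M̃₁,M₂}_ψ f)(a/λ, bλ), where (δ_λ f)(t) = f(λt) and M̃₁ = (A₁/λ², B₁; C₁, D₁λ²). -/
open MeasureTheory Set

noncomputable def lctKernel (A B D : ℝ) (t ξ : ℝ) : ℂ :=
  (1 / (2 * Real.pi * Complex.I * (B : ℂ)) ^ ((1:ℂ)/2)) *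
    Complex.exp (Complex.I / 2 * ((A / B * t ^ 2 - 2 / B * ξ * t + D / B * ξ ^ 2 : ℝ) : ℂ))

/-- The linear canonical transform (for `B ≠ 0`). -/
noncomputable def LCT (A B D : ℝ) (f : ℝ → ℂ) (ξ : ℝ) : ℂ :=
  ∫ t : ℝ, f t * lctKernel A B D t ξ

/-- The analyzing window `ψ^{M₁,M₂}_{a,b}` of the linear canonical Stockwell transform. -/
noncomputable def lcstWave (A₁ B₁ A₂ B₂ : ℝ) (ψ : ℝ → ℂ) (a b t : ℝ) : ℂ :=
  Complex.exp (Complex.I *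
      ((-(A₁ / (2 * B₁)) * (t ^ 2 - b ^ 2) + A₂ / (2 * B₂) * (a * (t - b)) ^ 2 + a * t / B₁ : ℝ) : ℂ)) *
    (a : ℂ) * ψ (a * (t - b))

/-- The linear canonical Stockwell transform. -/
noncomputable def LCST (A₁ B₁ A₂ B₂ : ℝ) (ψ f : ℝ → ℂ) (a b : ℝ) : ℂ :=
  ∫ t : ℝ, f t * (starRingEnd ℂ) (lcstWave A₁ B₁ A₂ B₂ ψ a b t)

/-
The substitution `s = l t` turns the LCST of `t ↦ f (l t)` into an integral of `f`. Under it the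
window at `(a, b)` with chirp `A₁` becomes, up to the amplitude factor `l⁻¹` coming from `a / l`,
the window at `(a / l, b l)` with chirp `A₁ / l²`: the arguments `a (t - b)` of `ψ`, the chirp
phase and the modulation `a t / B₁` are all invariant. The Jacobian `l⁻¹` of the substitution
cancels that amplitude factor.
-/

lemma lcstWave_dilation (A₁ B₁ A₂ B₂ : ℝ) (ψ : ℝ → ℂ) {l : ℝ} (hl : l ≠ 0) (a b t : ℝ) :
    lcstWave (A₁ / l ^ 2) B₁ A₂ B₂ ψ (a / l) (b * l) (l * t) =
      (l : ℂ)⁻¹ * lcstWave A₁ B₁ A₂ B₂ ψ a b t := by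
  have hargument : a / l * (l * t - b * l) = a * (t - b) := by field_simp
  have hphase : -(A₁ / l ^ 2 / (2 * B₁)) * ((l * t) ^ 2 - (b * l) ^ 2)
        + A₂ / (2 * B₂) * (a * (t - b)) ^ 2 + a / l * (l * t) / B₁
      = -(A₁ / (2 * B₁)) * (t ^ 2 - b ^ 2) + A₂ / (2 * B₂) * (a * (t - b)) ^ 2 + a * t / B₁ := by
    field_simp
  rw [lcstWave, lcstWave, hargument, hphase]
  push_cast
  ring

theorem lcst_dilation_general (A₁ B₁ A₂ B₂ : ℝ)
    (f ψ : ℝ → ℂ)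
    (l : ℝ) (hl : 0 < l) (a b : ℝ) :
    LCST A₁ B₁ A₂ B₂ ψ (fun t => f (l * t)) a b =
      LCST (A₁ / l ^ 2) B₁ A₂ B₂ ψ f (a / l) (b * l) := by
  set g : ℝ → ℂ := fun s =>
    f s * (starRingEnd ℂ) (lcstWave (A₁ / l ^ 2) B₁ A₂ B₂ ψ (a / l) (b * l) s)
  have hl' : (l : ℂ) ≠ 0 := Complex.ofReal_ne_zero.2 hl.ne'
  have hintegrand (t : ℝ) :
      f (l * t) * (starRingEnd ℂ) (lcstWave A₁ B₁ A₂ B₂ ψ a b t) = (l : ℂ) * g (l * t) := by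
    simp only [g, lcstWave_dilation A₁ B₁ A₂ B₂ ψ hl.ne', map_mul, map_inv₀, Complex.conj_ofReal]
    field_simp
  calc LCST A₁ B₁ A₂ B₂ ψ (fun t => f (l * t)) a b
      = (l : ℂ) * ∫ t, g (l * t) := by
        simp only [LCST, hintegrand, integral_const_mul]
    _ = ∫ s, g s := by
        rw [Measure.integral_comp_mul_left, abs_of_pos (inv_pos.2 hl), Complex.real_smul,
          Complex.ofReal_inv, mul_inv_cancel_left₀ hl']

/-- Dilation covariance of the LCST. -/
theorem lcst_dilation (A₁ B₁ C₁ D₁ A₂ B₂ C₂ D₂ : ℝ)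
    (hdet₁ : A₁ * D₁ - B₁ * C₁ = 1) (hdet₂ : A₂ * D₂ - B₂ * C₂ = 1)
    (hB₁ : B₁ ≠ 0) (hB₂ : B₂ ≠ 0)
    (f ψ : ℝ → ℂ) (hf : MemLp f 2 (volume : Measure ℝ)) (hψ : MemLp ψ 2 (volume : Measure ℝ))
    (l : ℝ) (hl : 0 < l) (a b : ℝ) (ha : 0 < a) :
    LCST A₁ B₁ A₂ B₂ ψ (fun t => f (l * t)) a b =
      LCST (A₁ / l ^ 2) B₁ A₂ B₂ ψ f (a / l) (b * l) :=
  lcst_dilation_general A₁ B₁ A₂ B₂ f ψ l hl a b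
end

section
/- Translation covariance of the LCST: for y ∈ ℝ, (S^{M₁,M₂}_ψ τ_y f)(a,b) = e^{−iay/B₁ − (iA₁/B₁) y(b−y)} (S^{M₁,M₂}_ψ {e^{(iA₁/B₁) yt} f(t)})(a, b−y), where (τ_y f)(t) = f(t−y). -/
open MeasureTheory Set

/-! Substituting `t ↦ t + y`, the window centred at `b` and evaluated at `t + y` differs from the
window centred at `b - y` and evaluated at `t` only by a unimodular phase that is affine in `t`;
its constant part factors out of the integral and its linear part is absorbed into the signal. -/

open ComplexConjugate

lemma conj_exp_I_mul_ofReal (r : ℝ) :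
    conj (Complex.exp (Complex.I * r)) = Complex.exp (Complex.I * ↑(-r)) := by
  rw [← Complex.exp_conj, map_mul, Complex.conj_I, Complex.conj_ofReal, Complex.ofReal_neg,
    neg_mul, mul_neg]

lemma lcstWave_add_right (A₁ B₁ A₂ B₂ : ℝ) (ψ : ℝ → ℂ) (a b y t : ℝ) :
    lcstWave A₁ B₁ A₂ B₂ ψ a b (t + y) =
      Complex.exp (Complex.I * ((a * y / B₁ + A₁ / B₁ * y * (b - y) - A₁ / B₁ * y * t : ℝ) : ℂ)) *
        lcstWave A₁ B₁ A₂ B₂ ψ a (b - y) t := by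
  simp only [lcstWave, ← mul_assoc, ← Complex.exp_add, ← mul_add, ← Complex.ofReal_add]
  rw [show a * (t + y - b) = a * (t - (b - y)) by ring]
  congr 3
  push_cast
  ring

theorem lcst_translation_general (A₁ B₁ A₂ B₂ : ℝ)
    (f ψ : ℝ → ℂ)
    (y : ℝ) (a b : ℝ) :
    LCST A₁ B₁ A₂ B₂ ψ (fun t => f (t - y)) a b =
      Complex.exp (Complex.I * ((-(a * y / B₁) - A₁ / B₁ * y * (b - y) : ℝ) : ℂ)) *
        LCST A₁ B₁ A₂ B₂ ψ (fun t => Complex.exp (Complex.I * ((A₁ / B₁ * y * t : ℝ) : ℂ)) * f t)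
          a (b - y) := by
  rw [LCST, ← integral_add_right_eq_self _ y, LCST, ← integral_const_mul]
  congr 1 with t
  have hphase :
      Complex.exp (Complex.I * ↑(-(a * y / B₁ + A₁ / B₁ * y * (b - y) - A₁ / B₁ * y * t))) =
        Complex.exp (Complex.I * ((-(a * y / B₁) - A₁ / B₁ * y * (b - y) : ℝ) : ℂ)) *
          Complex.exp (Complex.I * ((A₁ / B₁ * y * t : ℝ) : ℂ)) := by
    rw [← Complex.exp_add]
    congr 1
    push_cast
    ring
  rw [add_sub_cancel_right, lcstWave_add_right, map_mul, conj_exp_I_mul_ofReal, hphase]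
  ring

/-- Translation covariance of the LCST. -/
theorem lcst_translation (A₁ B₁ C₁ D₁ A₂ B₂ C₂ D₂ : ℝ)
    (hdet₁ : A₁ * D₁ - B₁ * C₁ = 1) (hdet₂ : A₂ * D₂ - B₂ * C₂ = 1)
    (hB₁ : B₁ ≠ 0) (hB₂ : B₂ ≠ 0)
    (f ψ : ℝ → ℂ) (hf : MemLp f 2 (volume : Measure ℝ)) (hψ : MemLp ψ 2 (volume : Measure ℝ))
    (y : ℝ) (a b : ℝ) (ha : 0 < a) :
    LCST A₁ B₁ A₂ B₂ ψ (fun t => f (t - y)) a b =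
      Complex.exp (Complex.I * ((-(a * y / B₁) - A₁ / B₁ * y * (b - y) : ℝ) : ℂ)) *
        LCST A₁ B₁ A₂ B₂ ψ (fun t => Complex.exp (Complex.I * ((A₁ / B₁ * y * t : ℝ) : ℂ)) * f t)
          a (b - y) :=
  lcst_translation_general A₁ B₁ A₂ B₂ f ψ y a b
end

section
/- The LCT of the analyzing function ψ^{M₁,M₂}_{a,b} factorizes as (L^{M₁} ψ^{M₁,M₂}_{a,b})(ξ) = √(2πiB₂) · exp(iab/B₁ − (iD₂/2B₂)(B₂ξ/(B₁a))²) · K_{M₁}(b,ξ) · (L^{M₂}{e^{it/B₁} ψ(t)})(B₂ξ/(B₁a)). -/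
open MeasureTheory Set

/-!
Substitute `u = a (t - b)` in the integral defining the left-hand side. After completing the
square, the quadratic phase of `ψ^{M₁,M₂}_{a,b}` times the kernel `K_{M₁}(t, ξ)` splits into a
constant phase, the kernel `K_{M₁}(b, ξ)`, the modulation `e^{iu/B₁}` and the kernel
`K_{M₂}(u, B₂ξ/(B₁a))`; the Jacobian `1/a` of the substitution cancels the amplitude `a` of the
window.
-/

theorem integral_smul_comp_mul_sub {E : Type*} [NormedAddCommGroup E] [NormedSpace ℝ E]
    (g : ℝ → E) {a : ℝ} (ha : 0 < a) (b : ℝ) :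
    ∫ t : ℝ, a • g (a * (t - b)) = ∫ u : ℝ, g u := by
  have hshift : ∫ t : ℝ, g (a * (t - b)) = ∫ t : ℝ, g (a * t) :=
    integral_sub_right_eq_self (fun t => g (a * t)) b
  rw [integral_smul, hshift, Measure.integral_comp_mul_left, abs_of_pos (inv_pos.2 ha),
    smul_smul, mul_inv_cancel₀ ha.ne', one_smul]

noncomputable def lctPhase (A B D t ξ : ℝ) : ℝ :=
  A / B * t ^ 2 - 2 / B * ξ * t + D / B * ξ ^ 2

theorem lctKernel_eq_inv_mul_exp (A B D t ξ : ℝ) :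
    lctKernel A B D t ξ = ((2 * Real.pi * Complex.I * (B : ℂ)) ^ ((1:ℂ)/2))⁻¹ *
      Complex.exp (Complex.I * ((lctPhase A B D t ξ / 2 : ℝ) : ℂ)) := by
  rw [lctKernel, lctPhase, one_div]
  congr 2
  push_cast
  ring

theorem lcstWave_phase_add_lctPhase (A₁ B₁ D₁ A₂ B₂ D₂ a b t ξ : ℝ)
    (hB₁ : B₁ ≠ 0) (hB₂ : B₂ ≠ 0) (ha : a ≠ 0) :
    (-(A₁ / (2 * B₁)) * (t ^ 2 - b ^ 2) + A₂ / (2 * B₂) * (a * (t - b)) ^ 2 + a * t / B₁) +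
        lctPhase A₁ B₁ D₁ t ξ / 2 =
      (a * b / B₁ - D₂ / (2 * B₂) * (B₂ * ξ / (B₁ * a)) ^ 2) + lctPhase A₁ B₁ D₁ b ξ / 2 +
        a * (t - b) / B₁ + lctPhase A₂ B₂ D₂ (a * (t - b)) (B₂ * ξ / (B₁ * a)) / 2 := by
  unfold lctPhase
  field_simp
  ring

theorem exp_I_ofReal_add (x y : ℝ) :
    Complex.exp (Complex.I * ((x + y : ℝ) : ℂ)) =
      Complex.exp (Complex.I * (x : ℂ)) * Complex.exp (Complex.I * (y : ℂ)) := by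
  rw [← Complex.exp_add]
  push_cast
  ring_nf

theorem lcstWave_mul_lctKernel (A₁ B₁ D₁ A₂ B₂ D₂ : ℝ) (hB₁ : B₁ ≠ 0) (hB₂ : B₂ ≠ 0)
    (ψ : ℝ → ℂ) {a : ℝ} (ha : a ≠ 0) (b t ξ : ℝ) :
    lcstWave A₁ B₁ A₂ B₂ ψ a b t * lctKernel A₁ B₁ D₁ t ξ =
      (2 * Real.pi * Complex.I * (B₂ : ℂ)) ^ ((1:ℂ)/2) *
          Complex.exp (Complex.I * ((a * b / B₁ - D₂ / (2 * B₂) * (B₂ * ξ / (B₁ * a)) ^ 2 : ℝ) : ℂ)) *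
          lctKernel A₁ B₁ D₁ b ξ *
        (a • (Complex.exp (Complex.I * ((a * (t - b) / B₁ : ℝ) : ℂ)) * ψ (a * (t - b)) *
          lctKernel A₂ B₂ D₂ (a * (t - b)) (B₂ * ξ / (B₁ * a)))) := by
  have hX₂ : (2 * Real.pi * Complex.I * (B₂ : ℂ)) ^ ((1:ℂ)/2) ≠ 0 := by
    rw [Ne, Complex.cpow_eq_zero_iff]
    simp [Real.pi_ne_zero, hB₂]
  have hphase : Complex.exp (Complex.I * (((-(A₁ / (2 * B₁)) * (t ^ 2 - b ^ 2) +
        A₂ / (2 * B₂) * (a * (t - b)) ^ 2 + a * t / B₁ : ℝ)) : ℂ)) *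
        Complex.exp (Complex.I * ((lctPhase A₁ B₁ D₁ t ξ / 2 : ℝ) : ℂ)) =
      Complex.exp (Complex.I * ((a * b / B₁ - D₂ / (2 * B₂) * (B₂ * ξ / (B₁ * a)) ^ 2 : ℝ) : ℂ)) *
        Complex.exp (Complex.I * ((lctPhase A₁ B₁ D₁ b ξ / 2 : ℝ) : ℂ)) *
        Complex.exp (Complex.I * ((a * (t - b) / B₁ : ℝ) : ℂ)) *
        Complex.exp (Complex.I *
          ((lctPhase A₂ B₂ D₂ (a * (t - b)) (B₂ * ξ / (B₁ * a)) / 2 : ℝ) : ℂ)) := by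
    simp only [← exp_I_ofReal_add,
      lcstWave_phase_add_lctPhase A₁ B₁ D₁ A₂ B₂ D₂ a b t ξ hB₁ hB₂ ha]
  rw [lcstWave, lctKernel_eq_inv_mul_exp, lctKernel_eq_inv_mul_exp, lctKernel_eq_inv_mul_exp,
    Complex.real_smul]
  set X₁ := (2 * Real.pi * Complex.I * (B₁ : ℂ)) ^ ((1:ℂ)/2)
  set X₂ := (2 * Real.pi * Complex.I * (B₂ : ℂ)) ^ ((1:ℂ)/2)
  linear_combination ((a : ℂ) * ψ (a * (t - b)) * X₁⁻¹) *
    hphase.trans (mul_inv_cancel_right₀ hX₂ _).symm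

theorem lct_of_lcst_wave_general (A₁ B₁ D₁ A₂ B₂ D₂ : ℝ)
    (hB₁ : B₁ ≠ 0) (hB₂ : B₂ ≠ 0)
    (ψ : ℝ → ℂ)
    (a b : ℝ) (ha : 0 < a) (ξ : ℝ) :
    LCT A₁ B₁ D₁ (lcstWave A₁ B₁ A₂ B₂ ψ a b) ξ =
      (2 * Real.pi * Complex.I * (B₂ : ℂ)) ^ ((1:ℂ)/2) *
        Complex.exp (Complex.I *
          ((a * b / B₁ - D₂ / (2 * B₂) * (B₂ * ξ / (B₁ * a)) ^ 2 : ℝ) : ℂ)) *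
        lctKernel A₁ B₁ D₁ b ξ *
        LCT A₂ B₂ D₂ (fun t => Complex.exp (Complex.I * ((t / B₁ : ℝ) : ℂ)) * ψ t)
          (B₂ * ξ / (B₁ * a)) := by
  simp only [LCT, lcstWave_mul_lctKernel A₁ B₁ D₁ A₂ B₂ D₂ hB₁ hB₂ ψ ha.ne', integral_const_mul,
    integral_smul_comp_mul_sub (fun u => Complex.exp (Complex.I * ((u / B₁ : ℝ) : ℂ)) * ψ u *
      lctKernel A₂ B₂ D₂ u (B₂ * ξ / (B₁ * a))) ha b]

/-- Factorization of the LCT of the analyzing function `ψ^{M₁,M₂}_{a,b}`. -/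
theorem lct_of_lcst_wave (A₁ B₁ C₁ D₁ A₂ B₂ C₂ D₂ : ℝ)
    (hdet₁ : A₁ * D₁ - B₁ * C₁ = 1) (hdet₂ : A₂ * D₂ - B₂ * C₂ = 1)
    (hB₁ : B₁ ≠ 0) (hB₂ : B₂ ≠ 0)
    (ψ : ℝ → ℂ) (hψ : MemLp ψ 2 (volume : Measure ℝ))
    (a b : ℝ) (ha : 0 < a) (ξ : ℝ) :
    LCT A₁ B₁ D₁ (lcstWave A₁ B₁ A₂ B₂ ψ a b) ξ =
      (2 * Real.pi * Complex.I * (B₂ : ℂ)) ^ ((1:ℂ)/2) *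
        Complex.exp (Complex.I *
          ((a * b / B₁ - D₂ / (2 * B₂) * (B₂ * ξ / (B₁ * a)) ^ 2 : ℝ) : ℂ)) *
        lctKernel A₁ B₁ D₁ b ξ *
        LCT A₂ B₂ D₂ (fun t => Complex.exp (Complex.I * ((t / B₁ : ℝ) : ℂ)) * ψ t)
          (B₂ * ξ / (B₁ * a)) :=
  lct_of_lcst_wave_general A₁ B₁ D₁ A₂ B₂ D₂ hB₁ hB₂ ψ a b ha ξ
end
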